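/- If M : {0,1}* → [0,1] is a computable semimeasure over the binary alphabet (so M(x0) + M(x1) ≤ M(x)) with M(x) > 0 for all x, then there exists a computable deterministic measure μ (i.e., a computable infinite sequence z with μ(z₁…z_t) = 1) such that M(z₁…z_t) ≤ 2^{-t} for all t; hence M does not dominate all computable measures. -/

import Mathlib

open Filter Topology

/-- The arithmetical hierarchy on subsets of ℕ.
`Sigma0 0` are the computable (recursive) sets; `Sigma0 (n+1) A` holds iff
`A` is the projection of a `Π⁰ₙ` set (a set whose complement is `Σ⁰ₙ`). -/
def Sigma0 : ℕ → Set ℕ → Prop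
  | 0, A => ComputablePred (· ∈ A)
  | (n+1), A => ∃ B : Set ℕ, Sigma0 n Bᶜ ∧ ∀ k, k ∈ A ↔ ∃ m, Nat.pair k m ∈ B

/-- `A ⊆ α` is `Σ⁰ₙ` (via the encoding of `α` into ℕ). -/
def SigmaN {α : Type*} [Primcodable α] (n : ℕ) (A : Set α) : Prop :=
  Sigma0 n (Encodable.encode '' A)

/-- `A ⊆ α` is `Π⁰ₙ`: its complement is `Σ⁰ₙ`. -/
def PiN {α : Type*} [Primcodable α] (n : ℕ) (A : Set α) : Prop :=
  SigmaN n Aᶜ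

/-- `A ⊆ α` is `Δ⁰ₙ`: both `Σ⁰ₙ` and `Π⁰ₙ`. -/
def DeltaN {α : Type*} [Primcodable α] (n : ℕ) (A : Set α) : Prop :=
  SigmaN n A ∧ PiN n A

/-- A real-valued function is `Δ⁰ₙ`-computable iff its strict lower graph
`{(x, q) | f x > q}` is `Δ⁰ₙ`. -/
def DeltaComputable {α : Type*} [Primcodable α] (n : ℕ) (f : α → ℝ) : Prop :=
  DeltaN n {p : α × ℚ | f p.1 > (p.2 : ℝ)}

/-- `f` is `Σ⁰ₙ`-computable (for n = 1: lower semicomputable). -/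
def SigmaComputable {α : Type*} [Primcodable α] (n : ℕ) (f : α → ℝ) : Prop :=
  SigmaN n {p : α × ℚ | f p.1 > (p.2 : ℝ)}

/-- `f` is `Π⁰ₙ`-computable. -/
def PiComputable {α : Type*} [Primcodable α] (n : ℕ) (f : α → ℝ) : Prop :=
  PiN n {p : α × ℚ | f p.1 > (p.2 : ℝ)}

/-- A semimeasure over a finite alphabet `X`. -/
def IsSemimeasure {X : Type*} [Fintype X] (ν : List X → ℝ) : Prop :=
  (∀ x, 0 ≤ ν x) ∧ ν [] ≤ 1 ∧ ∀ x : List X, ∑ a : X, ν (x ++ [a]) ≤ ν x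

namespace Stmt13Aux
open Encodable
open Encodable

/-- The "raw" rational encoding from `Rat.instEncodable`. -/
def E : ℚ → ℕ := @Encodable.encode ℚ Rat.instEncodable

lemma E_eq (q : ℚ) : E q = Nat.pair (Equiv.intEquivNat q.num) q.den := rfl

lemma intEquivNat_ofNat (k : ℕ) : Equiv.intEquivNat (Int.ofNat k) = 2 * k := by
  have h : Equiv.intEquivNat (Int.ofNat k) = Equiv.natSumNatEquivNat (Sum.inl k) := rfl
  rw [h, Equiv.natSumNatEquivNat_apply]; rfl

lemma intEquivNat_negSucc (k : ℕ) : Equiv.intEquivNat (Int.negSucc k) = 2 * k + 1 := by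
  have h : Equiv.intEquivNat (Int.negSucc k) = Equiv.natSumNatEquivNat (Sum.inr k) := rfl
  rw [h, Equiv.natSumNatEquivNat_apply]; rfl

/-- natAbs of the integer coded by `a`. -/
def na (a : ℕ) : ℕ := if a % 2 = 0 then a / 2 else a / 2 + 1

lemma na_intEquivNat (n : ℤ) : na (Equiv.intEquivNat n) = n.natAbs := by
  cases n with
  | ofNat k => rw [intEquivNat_ofNat]; simp [na]
  | negSucc k =>
    rw [intEquivNat_negSucc]
    simp only [na, Int.natAbs_negSucc]
    rw [if_neg (by omega)]
    omega

lemma mem_range_E (m : ℕ) :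
    m ∈ Set.range E ↔ 0 < m.unpair.2 ∧ Nat.gcd (na m.unpair.1) m.unpair.2 = 1 := by
  constructor
  · rintro ⟨q, rfl⟩
    rw [E_eq, Nat.unpair_pair]
    exact ⟨q.pos, by rw [na_intEquivNat]; exact q.reduced⟩
  · rintro ⟨h1, h2⟩
    refine ⟨⟨Equiv.intEquivNat.symm m.unpair.1, m.unpair.2, h1.ne', ?_⟩, ?_⟩
    · rwa [← na_intEquivNat, Equiv.apply_symm_apply]
    · rw [E_eq]
      show Nat.pair (Equiv.intEquivNat (Equiv.intEquivNat.symm m.unpair.1)) m.unpair.2 = m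
      rw [Equiv.apply_symm_apply, Nat.pair_unpair]

/-- One step of the Euclidean algorithm. -/
def gstep : ℕ × ℕ → ℕ × ℕ := fun p => if p.1 = 0 then p else (p.2 % p.1, p.1)

lemma gstep_iter_fst : ∀ (k : ℕ) (p : ℕ × ℕ), p.1 ≤ k → (gstep^[k] p).1 = 0
  | 0, p, h => by simpa using Nat.le_zero.mp h
  | k+1, p, h => by
    rw [Function.iterate_succ_apply]
    by_cases h0 : p.1 = 0
    · exact gstep_iter_fst k _ (by simp [gstep, h0])
    · apply gstep_iter_fst k
      simp only [gstep, if_neg h0]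
      have := Nat.mod_lt p.2 (Nat.pos_of_ne_zero h0)
      omega

lemma gstep_iter_gcd : ∀ (k : ℕ) (p : ℕ × ℕ),
    Nat.gcd (gstep^[k] p).1 (gstep^[k] p).2 = Nat.gcd p.1 p.2
  | 0, _ => rfl
  | k+1, p => by
    rw [Function.iterate_succ_apply, gstep_iter_gcd k]
    by_cases h0 : p.1 = 0
    · simp [gstep, h0]
    · simp only [gstep, if_neg h0]
      exact (Nat.gcd_rec p.1 p.2).symm

def mygcd (a b : ℕ) : ℕ := (gstep^[a+1] (a, b)).2

lemma mygcd_eq (a b : ℕ) : mygcd a b = Nat.gcd a b := by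
  have h1 : (gstep^[a+1] (a,b)).1 = 0 := gstep_iter_fst _ _ (by omega)
  have h2 := gstep_iter_gcd (a+1) (a,b)
  rw [h1, Nat.gcd_zero_left] at h2
  exact h2

/-- Computable characteristic function of `Set.range E`. -/
def chi (m : ℕ) : Bool := decide (0 < m.unpair.2) && decide (mygcd (na m.unpair.1) m.unpair.2 = 1)

lemma chi_eq (m : ℕ) (i : Decidable (m ∈ Set.range E)) : @decide (m ∈ Set.range E) i = chi m := by
  rcases hp : @decide (m ∈ Set.range E) i with _ | _
  · have hm := of_decide_eq_false hp
    rw [mem_range_E] at hm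
    symm
    rw [chi, Bool.and_eq_false_iff]
    by_cases h1 : 0 < m.unpair.2
    · right; rw [decide_eq_false_iff_not, mygcd_eq]; tauto
    · left; rw [decide_eq_false_iff_not]; exact h1
  · have hm := of_decide_eq_true hp
    rw [mem_range_E] at hm
    symm
    rw [chi, Bool.and_eq_true, decide_eq_true_eq, decide_eq_true_eq, mygcd_eq]
    exact hm

/-- Counting function equal to `countP` over `List.range`. -/
def cnt (f : ℕ → Bool) (n : ℕ) : ℕ := Nat.rec 0 (fun y ih => ih + cond (f y) 1 0) n

lemma cnt_eq (f : ℕ → Bool) : ∀ n, cnt f n = (List.range n).countP f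
  | 0 => rfl
  | n+1 => by
    rw [List.range_succ, List.countP_append]
    show cnt f n + cond (f n) 1 0 = _
    rw [cnt_eq f n]
    cases h : f n <;> simp [List.countP_cons, h]

lemma encode_eq_cnt (q : ℚ) :
    @Encodable.encode ℚ (Primcodable.ofDenumerable ℚ).toEncodable q = cnt chi (E q) := by
  have h0 : @Encodable.encode ℚ (Primcodable.ofDenumerable ℚ).toEncodable q
      = (List.range (E q)).countP
        (fun m => @decide (m ∈ Set.range E) (@Encodable.decidableRangeEncode ℚ Rat.instEncodable m)) := rfl
  rw [h0, ← cnt_eq]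
  exact congrArg (fun f => cnt f (E q)) (funext fun m => chi_eq m _)

def Ncode (t : ℕ) : ℕ := cnt chi (Nat.pair 2 (2^(t+1)))

lemma encode_pow (t : ℕ) :
    @Encodable.encode ℚ (Primcodable.ofDenumerable ℚ).toEncodable ((2:ℚ)⁻¹ ^ (t+1)) = Ncode t := by
  rw [encode_eq_cnt, E_eq]
  have hn : ((2:ℚ)⁻¹ ^ (t+1)).num = 1 := by
    rw [Rat.num_pow]
    norm_num [Rat.inv_def]
  have hd : ((2:ℚ)⁻¹ ^ (t+1)).den = 2^(t+1) := by
    rw [Rat.den_pow]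
    norm_num [Rat.inv_def]
  rw [hn, hd]
  have h1 : Equiv.intEquivNat (1:ℤ) = 2 := by
    have : (1:ℤ) = Int.ofNat 1 := rfl
    rw [this, intEquivNat_ofNat]
  rw [h1]
  rfl

lemma primrec_chi : Primrec chi := by
  have hu1 : Primrec fun m : ℕ => m.unpair.1 := Primrec.fst.comp Primrec.unpair
  have hu2 : Primrec fun m : ℕ => m.unpair.2 := Primrec.snd.comp Primrec.unpair
  have hna : Primrec na := by
    unfold na
    exact Primrec.ite
      (PrimrecRel.comp Primrec.eq (Primrec.nat_mod.comp .id (.const 2)) (.const 0))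
      (Primrec.nat_div.comp .id (.const 2))
      (Primrec.nat_add.comp (Primrec.nat_div.comp .id (.const 2)) (.const 1))
  have hgstep : Primrec gstep := by
    unfold gstep
    exact Primrec.ite (PrimrecRel.comp Primrec.eq Primrec.fst (.const 0)) .id
      (Primrec.pair (Primrec.nat_mod.comp Primrec.snd Primrec.fst) Primrec.fst)
  have hmygcd : Primrec₂ mygcd := by
    have : Primrec fun p : ℕ × ℕ => (gstep^[p.1+1] p).2 :=
      Primrec.snd.comp (Primrec.nat_iterate (Primrec.succ.comp Primrec.fst) .id
        (hgstep.comp Primrec.snd))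
    exact this.to₂
  have hc1 : PrimrecPred fun m : ℕ => 0 < m.unpair.2 :=
    PrimrecRel.comp Primrec.nat_lt (.const 0) hu2
  have hc2 : PrimrecPred fun m : ℕ => mygcd (na m.unpair.1) m.unpair.2 = 1 :=
    PrimrecRel.comp Primrec.eq (hmygcd.comp (hna.comp hu1) hu2) (.const 1)
  unfold chi
  exact (Primrec.dom_bool₂ (· && ·)).comp hc1.decide hc2.decide

lemma primrec_Ncode : Primrec Ncode := by
  have hcnt : Primrec (cnt chi) := by
    unfold cnt
    exact Primrec.nat_rec₁ 0
      (Primrec.nat_add.comp Primrec.snd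
        (Primrec.cond (primrec_chi.comp Primrec.fst) (.const 1) (.const 0))).to₂
  have hpow : Primrec fun t : ℕ => 2^(t+1) := by
    have h : Primrec fun t : ℕ => Nat.rec (motive := fun _ => ℕ) 2 (fun _ ih => 2*ih) t :=
      Primrec.nat_rec₁ 2 (Primrec.nat_mul.comp (.const 2) Primrec.snd).to₂
    exact h.of_eq fun t => by
      induction t with
      | zero => rfl
      | succ t ih => show 2 * (Nat.rec 2 _ t) = _; rw [ih]; ring
  exact hcnt.comp (Primrec₂.natPair.comp (.const 2) hpow)

def rseq (t : ℕ) : ℚ := (2:ℚ)⁻¹ ^ (t+1)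

lemma computable_rseq : Computable rseq := by
  have h1 : Computable fun t => Denumerable.ofNat ℚ (Ncode t) :=
    (Computable.ofNat ℚ).comp primrec_Ncode.to_comp
  exact h1.of_eq fun t => by
    rw [← encode_pow t]
    exact Denumerable.ofNat_encode _

open Encodable

theorem sigma1_re {S : Set ℕ} (h : Sigma0 1 S) : REPred (· ∈ S) := by
  obtain ⟨B, hB, hSB⟩ := h
  have hB' : ComputablePred (· ∈ Bᶜ) := hB
  have hBc : ComputablePred fun k => k ∈ B := by
    have h2 := hB'.not
    have heq : (fun k => ¬ (k ∈ Bᶜ)) = fun k => k ∈ B := funext fun k => propext (by simp)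
    rwa [heq] at h2
  obtain ⟨instB, hcB⟩ := hBc
  have hc2 : Computable₂ fun k m => @decide (Nat.pair k m ∈ B) (instB _) :=
    hcB.comp₂ Primrec₂.natPair.to_comp
  have hrf : Partrec fun k =>
      Nat.rfind ((fun m => @decide (Nat.pair k m ∈ B) (instB _) : ℕ → Bool) : ℕ →. Bool) :=
    Partrec.rfind hc2.partrec₂
  have hmap : Partrec fun k =>
      (Nat.rfind ((fun m => @decide (Nat.pair k m ∈ B) (instB _) : ℕ → Bool) : ℕ →. Bool)).map
        (fun _ => ()) :=
    hrf.map ((Computable.const ()).comp Computable.fst).to₂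
  refine hmap.of_eq fun k => ?_
  apply Part.ext
  intro u
  simp only [Part.mem_map_iff, Part.mem_assert_iff, Nat.mem_rfind, Part.coe_some,
    Part.mem_some_iff, PFun.coe_val, decide_eq_true_eq]
  constructor
  · rintro ⟨n, ⟨hn, -⟩, -⟩
    exact ⟨(hSB k).2 ⟨n, of_decide_eq_true hn.symm⟩, trivial⟩
  · rintro ⟨hk, -⟩
    obtain ⟨m, hm⟩ := (hSB k).1 hk
    have hdom : (Nat.rfind ((fun m => @decide (Nat.pair k m ∈ B) (instB _) : ℕ → Bool) : ℕ →. Bool)).Dom := by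
      rw [Nat.rfind_dom]
      exact ⟨m, by simpa using hm, fun _ => trivial⟩
    obtain ⟨n, hn⟩ := Part.dom_iff_mem.1 hdom
    rw [Nat.mem_rfind] at hn
    obtain ⟨h1, h2⟩ := hn
    refine ⟨n, ⟨?_, fun {m'} hm' => ?_⟩, trivial⟩
    · simpa using h1
    · simpa using h2 hm'

theorem delta1_computable {α : Type*} [Primcodable α] {A : Set α} (h : DeltaN 1 A) :
    ComputablePred fun a => a ∈ A := by
  haveI : DecidablePred (· ∈ A) := Classical.decPred _
  rw [ComputablePred.computable_iff_re_compl_re]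
  constructor
  · have h1 := sigma1_re h.1
    have h2 : Partrec fun a : α =>
        Part.assert (Encodable.encode a ∈ Encodable.encode '' A) fun _ => Part.some () :=
      Partrec.comp h1 Computable.encode
    refine h2.of_eq fun a => ?_
    rw [show (Encodable.encode a ∈ Encodable.encode '' A) = (a ∈ A) from
      propext (Encodable.encode_injective.mem_set_image)]
  · have h1 := sigma1_re h.2
    have h2 : Partrec fun a : α =>
        Part.assert (Encodable.encode a ∈ Encodable.encode '' Aᶜ) fun _ => Part.some () :=
      Partrec.comp h1 Computable.encode
    refine h2.of_eq fun a => ?_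
    rw [show (Encodable.encode a ∈ Encodable.encode '' Aᶜ) = ¬(a ∈ A) from
      propext ((Encodable.encode_injective.mem_set_image).trans (Set.mem_compl_iff _ _))]


end Stmt13Aux

namespace Stmt13Aux
open Encodable

def Fd (d : List Bool × ℚ → Bool) : ℕ → List Bool := fun t =>
  Nat.rec [] (fun y IH => IH ++ [d (IH ++ [false], rseq y)]) t

def zd (d : List Bool × ℚ → Bool) (t : ℕ) : Bool := d (Fd d t ++ [false], rseq t)

lemma Fd_succ (d : List Bool × ℚ → Bool) (t : ℕ) : Fd d (t+1) = Fd d t ++ [zd d t] := rfl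

lemma computable_zd {d : List Bool × ℚ → Bool} (hd : Computable d) : Computable (zd d) := by
  have happ : Computable₂ (fun l1 l2 : List Bool => l1 ++ l2) := Primrec.list_append.to_comp
  have hF : Computable (Fd d) := by
    have h1 : Computable fun p : ℕ × List Bool => d (p.2 ++ [false], rseq p.1) :=
      hd.comp (Computable.pair (happ.comp Computable.snd (Computable.const [false]))
        (computable_rseq.comp Computable.fst))
    have h2 : Computable fun p : ℕ × List Bool => p.2 ++ [d (p.2 ++ [false], rseq p.1)] :=
      happ.comp Computable.snd ((Primrec.list_cons.to_comp).comp h1 (Computable.const []))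
    exact Computable.nat_rec Computable.id (Computable.const ([] : List Bool))
      ((h2.comp Computable.snd).to₂)
  exact hd.comp (Computable.pair (happ.comp hF (Computable.const [false])) computable_rseq)

lemma ofFn_zd (d : List Bool × ℚ → Bool) : ∀ t, List.ofFn (fun i : Fin t => zd d i) = Fd d t
  | 0 => rfl
  | t+1 => by
    rw [List.ofFn_succ', Fd_succ, List.concat_eq_append, ← ofFn_zd d t]
    congr 1

theorem main {M : List Bool → ℝ} (hsm : IsSemimeasure M)
    (d : List Bool × ℚ → Bool) (hdc : Computable d)
    (hdt : ∀ p : List Bool × ℚ, d p = true ↔ M p.1 > (p.2 : ℝ)) :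
    ∃ z : ℕ → Bool, Computable z ∧
      (∀ t : ℕ, M (List.ofFn fun i : Fin t => z i) ≤ (2 : ℝ)⁻¹ ^ t) ∧
      ¬ ∃ w : ℝ, 0 < w ∧ ∀ x : List Bool,
          w * (if ∀ i : Fin x.length, x.get i = z i then (1 : ℝ) else 0) ≤ M x := by
  have hMb : ∀ t, M (Fd d t) ≤ (2:ℝ)⁻¹ ^ t := by
    intro t; induction t with
    | zero => show M [] ≤ _; simpa using hsm.2.1
    | succ t ih =>
      have hsum := hsm.2.2 (Fd d t)
      rw [Fintype.sum_bool] at hsum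
      have hcast : ((rseq t : ℚ) : ℝ) = (2:ℝ)⁻¹ ^ (t+1) := by
        unfold rseq; push_cast; norm_num
      have hps : (2:ℝ)⁻¹ ^ (t+1) = (2:ℝ)⁻¹ ^ t * 2⁻¹ := pow_succ _ _
      rw [Fd_succ]
      by_cases hgt : M (Fd d t ++ [false]) > ((rseq t : ℚ) : ℝ)
      · have hz : zd d t = true := (hdt _).2 hgt
        rw [hz]
        rw [hcast] at hgt
        linarith
      · have hz : zd d t = false := Bool.eq_false_iff.2 (fun h => hgt ((hdt _).1 h))
        rw [hz]
        rw [hcast] at hgt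
        have := not_lt.mp hgt
        linarith
  refine ⟨zd d, computable_zd hdc, ?_, ?_⟩
  · intro t
    rw [ofFn_zd]
    exact hMb t
  · rintro ⟨w, hw, hdom⟩
    obtain ⟨t, ht⟩ := exists_pow_lt_of_lt_one hw (by norm_num : (2:ℝ)⁻¹ < 1)
    have hcond : ∀ i : Fin (List.ofFn fun j : Fin t => zd d ↑j).length,
        (List.ofFn fun j : Fin t => zd d ↑j).get i = zd d ↑i := by
      intro i
      simp [List.get_ofFn]
    have h1 := hdom (List.ofFn fun j : Fin t => zd d ↑j)
    rw [if_pos hcond, mul_one] at h1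
    have h3 : M (List.ofFn fun j : Fin t => zd d ↑j) ≤ (2:ℝ)⁻¹ ^ t := by
      rw [ofFn_zd]; exact hMb t
    linarith

end Stmt13Aux

/-- No computable positive semimeasure on binary strings is universal: there is a
computable adversarial sequence `z` whose prefixes get `M`-probability at most
`2⁻ᵗ`, so `M` fails to dominate the computable deterministic measure of `z`. -/
theorem stmt13 (M : List Bool → ℝ) (hsm : IsSemimeasure M)
    (hcomp : DeltaComputable 1 M) (hpos : ∀ x, 0 < M x) :
    ∃ z : ℕ → Bool, Computable z ∧
      (∀ t : ℕ, M (List.ofFn fun i : Fin t => z i) ≤ (2 : ℝ)⁻¹ ^ t) ∧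
      ¬ ∃ w : ℝ, 0 < w ∧ ∀ x : List Bool,
          w * (if ∀ i : Fin x.length, x.get i = z i then (1 : ℝ) else 0) ≤ M x := by
  obtain ⟨inst, hd⟩ := Stmt13Aux.delta1_computable hcomp
  exact Stmt13Aux.main hsm
    (fun p => @decide (p ∈ {p : List Bool × ℚ | M p.1 > (p.2 : ℝ)}) (inst p)) hd
    (fun p => by rw [decide_eq_true_eq]; exact Iff.rfl)
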